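/- arXiv:2601.00524 — 3 statements merged into one kernel-verified Lean document; each statement's English description precedes it below -/
import Mathlib

section
/- In the Hopf algebra ĥU with coproduct Δ(E_i) = E_i ⊗ 1 + K_i ⊗ E_i, Δ(F_i) = 1 ⊗ F_i + F_i ⊗ K_i', Δ(K_i) = K_i ⊗ K_i, Δ(K_i') = K_i' ⊗ K_i', the element B_i = F_i + E_{τi} K_i' satisfies Δ(B_i) = B_i ⊗ K_i' + 1 ⊗ F_i + k̃_{τi} ⊗ E_{τi} K_i', where k̃_{τi} = K_{τi} K_i'. In particular, Δ(B_i) lies in Ũ^ı ⊗ ĥU, where Ũ^ı is the subalgebra generated by the B_j and k̃_j. -/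
/-! The Drinfeld double quantum group ĥU presented by generators
`E i, F i, K i, K' i` and the standard relations; statement: `K i * K' i`
is central. -/

noncomputable section

/-- The base field `ℚ(v^{1/2})`, realized as rational functions over `ℚ`,
with `sqv` playing the role of `v^{1/2}`. -/
abbrev QV : Type := RatFunc ℚ

/-- `v^{1/2}` -/
def sqv : QV := RatFunc.X

/-- the quantum parameter `v = (v^{1/2})^2` -/
def qv : QV := sqv ^ 2

/-- A symmetrizable generalized Cartan matrix on an index type `I`. -/
structure GCM (I : Type) where
  c : I → I → ℤ
  d : I → ℤ
  d_pos : ∀ i, 0 < d i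
  symmetrize : ∀ i j, d i * c i j = d j * c j i
  diag : ∀ i, c i i = 2
  offdiag : ∀ i j, i ≠ j → c i j ≤ 0

/-- `v_i = v^{d_i}`. -/
def GCM.vi {I : Type} (A : GCM I) (i : I) : QV := qv ^ A.d i

/-- quantum integer `[k]_q`. -/
def qint (q : QV) (k : ℕ) : QV := (q ^ k - q⁻¹ ^ k) / (q - q⁻¹)

/-- quantum factorial `[n]_q!`. -/
def qfact (q : QV) (n : ℕ) : QV := ∏ k ∈ Finset.range n, qint q (k + 1)

/-- quantum binomial coefficient. -/
def qbinom (q : QV) (m r : ℕ) : QV := qfact q m / (qfact q r * qfact q (m - r))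

/-- Generators of the Drinfeld double quantum group. -/
inductive DDGen (I : Type) : Type
  | E : I → DDGen I
  | F : I → DDGen I
  | K : I → DDGen I
  | K' : I → DDGen I

namespace DD

variable {I : Type} [DecidableEq I] (A : GCM I)

/-- the free algebra on the generators -/
abbrev FA (I : Type) := FreeAlgebra QV (DDGen I)

def e (i : I) : FA I := FreeAlgebra.ι QV (DDGen.E i)
def f (i : I) : FA I := FreeAlgebra.ι QV (DDGen.F i)
def k (i : I) : FA I := FreeAlgebra.ι QV (DDGen.K i)
def k' (i : I) : FA I := FreeAlgebra.ι QV (DDGen.K' i)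

/-- upper bound `1 - c_{ij}` in the quantum Serre relation -/
def serreN (i j : I) : ℕ := (1 - A.c i j).toNat

/-- The defining relations of `ĥU`. -/
inductive Rel : FA I → FA I → Prop
  | EF : ∀ i j, Rel (e i * f j - f j * e i)
      (if i = j then ((A.vi i)⁻¹ - A.vi i) • (k i - k' i) else 0)
  | KK : ∀ i j, Rel (k i * k j) (k j * k i)
  | KKp : ∀ i j, Rel (k i * k' j) (k' j * k i)
  | KpKp : ∀ i j, Rel (k' i * k' j) (k' j * k' i)
  | KE : ∀ i j, Rel (k i * e j) ((A.vi i ^ A.c i j) • (e j * k i))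
  | KF : ∀ i j, Rel (k i * f j) ((A.vi i ^ (-A.c i j)) • (f j * k i))
  | KpE : ∀ i j, Rel (k' i * e j) ((A.vi i ^ (-A.c i j)) • (e j * k' i))
  | KpF : ∀ i j, Rel (k' i * f j) ((A.vi i ^ A.c i j) • (f j * k' i))
  | serreE : ∀ i j, i ≠ j → Rel
      (∑ r ∈ Finset.range (serreN A i j + 1),
        ((-1 : QV) ^ r * qbinom (A.vi i) (serreN A i j) r) •
          (e i ^ r * e j * e i ^ (serreN A i j - r))) 0
  | serreF : ∀ i j, i ≠ j → Rel
      (∑ r ∈ Finset.range (serreN A i j + 1),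
        ((-1 : QV) ^ r * qbinom (A.vi i) (serreN A i j) r) •
          (f i ^ r * f j * f i ^ (serreN A i j - r))) 0

/-- the Drinfeld double quantum group `ĥU` -/
abbrev hU := RingQuot (Rel A)

def EE (i : I) : hU A := RingQuot.mkAlgHom QV (Rel A) (e i)
def FF (i : I) : hU A := RingQuot.mkAlgHom QV (Rel A) (f i)
def KK (i : I) : hU A := RingQuot.mkAlgHom QV (Rel A) (k i)
def KKp (i : I) : hU A := RingQuot.mkAlgHom QV (Rel A) (k' i)

end DD

open scoped TensorProduct

namespace DD

variable {I : Type} [DecidableEq I] (A : GCM I)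

/-- `B_i = F_i + E_{τi} K_i'` -/
def Bgen (τ : I → I) (i : I) : hU A := FF A i + EE A (τ i) * KKp A i

/-- `k̃_i = K_i K_{τi}'` -/
def ktilde (τ : I → I) (i : I) : hU A := KK A i * KKp A (τ i)

/-- the universal iquantum group `Ũ^ı`, the subalgebra generated by the
`B_j` and the `k̃_j` -/
def Ui (τ : I → I) : Subalgebra QV (hU A) :=
  Algebra.adjoin QV (Set.range (Bgen A τ) ∪ Set.range (ktilde A τ))

end DD

set_option synthInstance.maxHeartbeats 1000000 in
/-- For the coproduct `Δ` of the Hopf algebra `ĥU`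
(the algebra map determined by `Δ(E_i) = E_i ⊗ 1 + K_i ⊗ E_i`,
`Δ(F_i) = 1 ⊗ F_i + F_i ⊗ K_i'`, `Δ(K_i) = K_i ⊗ K_i`,
`Δ(K_i') = K_i' ⊗ K_i'`), the element `B_i = F_i + E_{τi} K_i'` satisfies
`Δ(B_i) = B_i ⊗ K_i' + 1 ⊗ F_i + k̃_{τi} ⊗ E_{τi} K_i'`, and in particular
`Δ(B_i)` lies in `Ũ^ı ⊗ ĥU`. -/
theorem statement1 {I : Type} [DecidableEq I] (A : GCM I)
    (τ : I → I) (hτ : ∀ i, τ (τ i) = i)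
    (hcτ : ∀ i j, A.c (τ i) (τ j) = A.c i j)
    (Δ : DD.hU A →ₐ[QV] (DD.hU A ⊗[QV] DD.hU A))
    (hE : ∀ i, Δ (DD.EE A i) = DD.EE A i ⊗ₜ 1 + DD.KK A i ⊗ₜ DD.EE A i)
    (hF : ∀ i, Δ (DD.FF A i) = 1 ⊗ₜ DD.FF A i + DD.FF A i ⊗ₜ DD.KKp A i)
    (hK : ∀ i, Δ (DD.KK A i) = DD.KK A i ⊗ₜ DD.KK A i)
    (hKp : ∀ i, Δ (DD.KKp A i) = DD.KKp A i ⊗ₜ DD.KKp A i) (i : I) :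
    Δ (DD.Bgen A τ i)
        = DD.Bgen A τ i ⊗ₜ DD.KKp A i + 1 ⊗ₜ DD.FF A i
            + DD.ktilde A τ (τ i) ⊗ₜ (DD.EE A (τ i) * DD.KKp A i)
      ∧ Δ (DD.Bgen A τ i)
          ∈ (Algebra.TensorProduct.map (DD.Ui A τ).val
              (AlgHom.id QV (DD.hU A))).range := by
  have hBmem : DD.Bgen A τ i ∈ DD.Ui A τ :=
    Algebra.subset_adjoin (Set.mem_union_left _ ⟨i, rfl⟩)
  have hkmem : DD.ktilde A τ (τ i) ∈ DD.Ui A τ :=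
    Algebra.subset_adjoin (Set.mem_union_right _ ⟨τ i, rfl⟩)
  have h1 : Δ (DD.Bgen A τ i)
      = DD.Bgen A τ i ⊗ₜ DD.KKp A i + 1 ⊗ₜ DD.FF A i
          + DD.ktilde A τ (τ i) ⊗ₜ (DD.EE A (τ i) * DD.KKp A i) := by
    rw [DD.Bgen, map_add, map_mul, hE, hF, hKp, DD.ktilde, hτ]
    rw [add_mul, Algebra.TensorProduct.tmul_mul_tmul,
      Algebra.TensorProduct.tmul_mul_tmul, one_mul,
      TensorProduct.add_tmul]
    abel
  refine ⟨h1, ?_⟩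
  rw [h1]
  refine ⟨((⟨DD.Bgen A τ i, hBmem⟩ : DD.Ui A τ) ⊗ₜ[QV] DD.KKp A i
      + (1 : DD.Ui A τ) ⊗ₜ[QV] DD.FF A i
      + (⟨DD.ktilde A τ (τ i), hkmem⟩ : DD.Ui A τ) ⊗ₜ[QV]
          (DD.EE A (τ i) * DD.KKp A i)), ?_⟩
  simp [Algebra.TensorProduct.map_tmul]


end
end

section
/- There exists a unique ℚ-algebra anti-automorphism (bar-involution) of ĥU sending v^{1/2} ↦ v^{-1/2}, E_i ↦ E_i, F_i ↦ F_i, K_i ↦ K_i, K_i' ↦ K_i', and it is an involution. -/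
/-! The Drinfeld double quantum group ĥU presented by generators
`E i, F i, K i, K' i` and the standard relations; statement: `K i * K' i`
is central. -/

noncomputable section

open scoped nonZeroDivisors

namespace BarAux
open DD MulOpposite

/-! ### The bar field automorphism `σ` of `ℚ(v^{1/2})` -/

theorem transcendental_sqv_inv : Transcendental ℚ (sqv⁻¹) := by
  rw [sqv, Transcendental, IsAlgebraic.inv_iff]
  have : Transcendental ℚ (algebraMap (Polynomial ℚ) QV Polynomial.X) :=
    (transcendental_algebraMap_iff (IsFractionRing.injective _ _)).2
      (Polynomial.transcendental_X ℚ)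
  rwa [RatFunc.algebraMap_X] at this

def phib : Polynomial ℚ →+* QV := (Polynomial.aeval (sqv⁻¹ : QV)).toRingHom

theorem phib_ne_zero {p : Polynomial ℚ} (hp : p ≠ 0) : phib p ≠ 0 := fun h =>
  hp ((transcendental_iff.1 transcendental_sqv_inv) p h)

theorem hphib : (Polynomial ℚ)⁰ ≤ (QV⁰).comap phib := fun p hp =>
  mem_nonZeroDivisors_of_ne_zero (phib_ne_zero (nonZeroDivisors.ne_zero hp))

def σ : QV →+* QV := RatFunc.liftRingHom phib hphib

theorem σ_poly (p : Polynomial ℚ) : σ (algebraMap _ _ p) = phib p := by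
  have := RatFunc.liftRingHom_apply_div phib hphib p 1
  simp only [map_one, div_one] at this; exact this

theorem σ_sqv : σ sqv = sqv⁻¹ := by
  have := σ_poly Polynomial.X
  rw [RatFunc.algebraMap_X, ← sqv] at this
  rw [this]
  simp [phib]

theorem ringHom_ext {R : Type*} [Semiring R] {f g : QV →+* R}
    (hfg : ∀ c : Polynomial ℚ, c ≠ 0 → IsUnit (f (algebraMap (Polynomial ℚ) QV c)))
    (h : f sqv = g sqv) : f = g := by
  have hpoly : f.comp (algebraMap (Polynomial ℚ) QV) = g.comp (algebraMap (Polynomial ℚ) QV) := by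
    apply Polynomial.ringHom_ext
    · intro a
      have : (f.comp (algebraMap (Polynomial ℚ) QV)).comp (Polynomial.C : ℚ →+* Polynomial ℚ)
          = (g.comp (algebraMap (Polynomial ℚ) QV)).comp (Polynomial.C : ℚ →+* Polynomial ℚ) :=
        Subsingleton.elim _ _
      exact RingHom.congr_fun this a
    · simpa [RatFunc.algebraMap_X, sqv] using h
  have hp : ∀ p : Polynomial ℚ, f (algebraMap (Polynomial ℚ) QV p)
      = g (algebraMap (Polynomial ℚ) QV p) := fun p => RingHom.congr_fun hpoly p
  ext x
  have hden : algebraMap (Polynomial ℚ) QV x.denom ≠ 0 := by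
    simpa using RatFunc.denom_ne_zero x
  have hkey : x * algebraMap (Polynomial ℚ) QV x.denom = algebraMap (Polynomial ℚ) QV x.num :=
    ((div_eq_iff hden).1 (RatFunc.num_div_denom x)).symm
  have h1 : f x * f (algebraMap (Polynomial ℚ) QV x.denom)
      = g x * g (algebraMap (Polynomial ℚ) QV x.denom) := by
    rw [← map_mul, ← map_mul, hkey, hp]
  rw [hp] at h1
  exact (hfg x.denom (RatFunc.denom_ne_zero x)).mul_right_cancel (by rw [hp]; exact h1)

theorem σ_σ : ∀ x, σ (σ x) = x := by
  have : σ.comp σ = RingHom.id QV := by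
    apply ringHom_ext
    · intro c hc
      have hne : algebraMap (Polynomial ℚ) QV c ≠ 0 := by
        simpa using fun h => hc (IsFractionRing.injective (Polynomial ℚ) QV (by simpa using h))
      exact (isUnit_iff_ne_zero.2 hne).map (σ.comp σ)
    · simp [RingHom.comp_apply, σ_sqv, map_inv₀]
  exact fun x => RingHom.congr_fun this x

theorem σ_rat (q : ℚ) : σ (algebraMap ℚ QV q) = algebraMap ℚ QV q :=
  RingHom.congr_fun (Subsingleton.elim (σ.comp (algebraMap ℚ QV)) (algebraMap ℚ QV)) q

theorem sqv_ne_zero : sqv ≠ 0 := RatFunc.X_ne_zero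
theorem qv_ne_zero : qv ≠ 0 := pow_ne_zero _ sqv_ne_zero

theorem σ_qv : σ qv = qv⁻¹ := by rw [qv, map_pow, σ_sqv, inv_pow]

theorem vi_ne_zero {I : Type} (A : GCM I) (i : I) : A.vi i ≠ 0 :=
  zpow_ne_zero _ qv_ne_zero

theorem σ_vi {I : Type} (A : GCM I) (i : I) : σ (A.vi i) = (A.vi i)⁻¹ := by
  rw [GCM.vi, map_zpow₀, σ_qv, inv_zpow]

theorem qint_inv (q : QV) (k : ℕ) : qint q⁻¹ k = qint q k := by
  rw [qint, qint, inv_inv, show q⁻¹ ^ k - q ^ k = -(q ^ k - q⁻¹ ^ k) by ring,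
    show q⁻¹ - q = -(q - q⁻¹) by ring, neg_div_neg_eq]

theorem σ_qint (q : QV) (k : ℕ) : σ (qint q k) = qint (σ q) k := by
  rw [qint, qint, map_div₀, map_sub, map_sub, map_pow, map_pow, map_inv₀]

theorem σ_qfact (q : QV) (n : ℕ) : σ (qfact q n) = qfact (σ q) n := by
  rw [qfact, qfact, map_prod]
  exact Finset.prod_congr rfl fun k _ => σ_qint q (k + 1)

theorem qfact_inv (q : QV) (n : ℕ) : qfact q⁻¹ n = qfact q n := by
  rw [qfact, qfact]; exact Finset.prod_congr rfl fun k _ => qint_inv q (k + 1)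

theorem σ_qbinom_vi {I : Type} (A : GCM I) (i : I) (m r : ℕ) :
    σ (qbinom (A.vi i) m r) = qbinom (A.vi i) m r := by
  rw [qbinom, map_div₀, map_mul, σ_qfact, σ_qfact, σ_qfact, σ_vi,
    qfact_inv, qfact_inv, qfact_inv, ← qbinom]

theorem qbinom_symm (q : QV) {m r : ℕ} (h : r ≤ m) :
    qbinom q m (m - r) = qbinom q m r := by
  rw [qbinom, qbinom, Nat.sub_sub_self h, mul_comm]

/-! ### The twisted opposite algebra -/

variable {I : Type} [DecidableEq I] (A : GCM I)

def Tw : Type := (hU A)ᵐᵒᵖ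

instance : Ring (Tw A) := inferInstanceAs (Ring (hU A)ᵐᵒᵖ)

def twMap : QV →+* Tw A :=
  ((algebraMap QV (hU A)).comp σ).toOpposite fun x y => by
    simp only [RingHom.comp_apply, Commute, SemiconjBy, ← map_mul, mul_comm]

instance : Algebra QV (Tw A) :=
  (twMap A).toAlgebra' fun c x => unop_injective <| by
    show unop ((twMap A c) * x) = unop (x * twMap A c)
    have : twMap A c = op (algebraMap QV (hU A) (σ c)) := rfl
    rw [this]
    show unop x * algebraMap QV (hU A) (σ c) = algebraMap QV (hU A) (σ c) * unop x
    exact (Algebra.commutes _ _).symm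

/-- `op` as a map into the twisted opposite algebra. -/
def twop (x : hU A) : Tw A := op x

theorem twop_inj : Function.Injective (twop A) := fun x y h =>
  congrArg MulOpposite.unop h

theorem twop_mul (x y : hU A) : twop A x * twop A y = twop A (y * x) := rfl
theorem twop_add (x y : hU A) : twop A x + twop A y = twop A (x + y) := rfl
theorem twop_sub (x y : hU A) : twop A x - twop A y = twop A (x - y) := rfl
theorem twop_zero : (0 : Tw A) = twop A 0 := rfl
theorem twop_one : (1 : Tw A) = twop A 1 := rfl

theorem twop_pow (x : hU A) (m : ℕ) : twop A x ^ m = twop A (x ^ m) := by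
  induction m with
  | zero => rfl
  | succ m ih => rw [pow_succ, ih, twop_mul, ← pow_succ']

theorem tw_algebraMap (c : QV) :
    algebraMap QV (Tw A) c = twop A (algebraMap QV (hU A) (σ c)) := rfl

theorem twop_smul (c : QV) (x : hU A) :
    c • twop A x = twop A (σ c • x) := by
  rw [Algebra.smul_def, tw_algebraMap, twop_mul]
  exact congrArg (twop A) (by rw [Algebra.smul_def, Algebra.commutes])

def twopHom : hU A →+ Tw A where
  toFun := twop A
  map_zero' := rfl
  map_add' := fun _ _ => rfl

theorem twop_sum {α : Type} (s : Finset α) (g : α → hU A) :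
    ∑ r ∈ s, twop A (g r) = twop A (∑ r ∈ s, g r) := (map_sum (twopHom A) g s).symm

/-! ### Lifting to the quotient -/

def genMap : DDGen I → hU A
  | DDGen.E i => EE A i
  | DDGen.F i => FF A i
  | DDGen.K i => KK A i
  | DDGen.K' i => KKp A i

def Φ : FA I →ₐ[QV] Tw A :=
  FreeAlgebra.lift QV fun g => twop A (genMap A g)

theorem Φ_e (i : I) : Φ A (e i) = twop A (EE A i) := FreeAlgebra.lift_ι_apply _ _
theorem Φ_f (i : I) : Φ A (f i) = twop A (FF A i) := FreeAlgebra.lift_ι_apply _ _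
theorem Φ_k (i : I) : Φ A (k i) = twop A (KK A i) := FreeAlgebra.lift_ι_apply _ _
theorem Φ_k' (i : I) : Φ A (k' i) = twop A (KKp A i) := FreeAlgebra.lift_ι_apply _ _

theorem EE_def (i : I) : RingQuot.mkAlgHom QV (Rel A) (e i) = EE A i := rfl
theorem FF_def (i : I) : RingQuot.mkAlgHom QV (Rel A) (f i) = FF A i := rfl
theorem KK_def (i : I) : RingQuot.mkAlgHom QV (Rel A) (k i) = KK A i := rfl
theorem KKp_def (i : I) : RingQuot.mkAlgHom QV (Rel A) (k' i) = KKp A i := rfl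

theorem neg_one_pow_sub (n r : ℕ) (h : r ≤ n) :
    ((-1 : QV)) ^ (n - r) = (-1) ^ n * (-1) ^ r := by
  have h2 : ((-1 : QV)) ^ r * (-1) ^ r = 1 := by
    rw [← pow_add, ← two_mul, pow_mul]; norm_num
  calc ((-1 : QV)) ^ (n - r) = (-1) ^ (n - r) * ((-1) ^ r * (-1) ^ r) := by rw [h2, mul_one]
    _ = ((-1) ^ (n - r) * (-1) ^ r) * (-1) ^ r := by ring
    _ = (-1) ^ n * (-1) ^ r := by rw [← pow_add, Nat.sub_add_cancel h]

theorem σ_coeff {I : Type} (A : GCM I) (i : I) (n r : ℕ) :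
    σ ((-1 : QV) ^ r * qbinom (A.vi i) n r) = (-1 : QV) ^ r * qbinom (A.vi i) n r := by
  rw [map_mul, map_pow, map_neg, map_one, σ_qbinom_vi]

theorem Φrel : ∀ ⦃a b : FA I⦄, Rel A a b → Φ A a = Φ A b := by
  intro a b h
  induction h with
  | EF i j =>
    have hr := RingQuot.mkAlgHom_rel QV (Rel.EF (A := A) i j)
    simp only [map_sub, map_mul, map_smul, apply_ite (RingQuot.mkAlgHom QV (Rel A)),
      map_zero, EE_def, FF_def, KK_def, KKp_def] at hr
    by_cases hij : i = j
    · subst hij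
      rw [if_pos rfl] at hr ⊢
      rw [map_sub, map_mul, map_mul, map_smul, map_sub, Φ_e, Φ_f, Φ_k, Φ_k',
        twop_mul, twop_mul, twop_sub, twop_sub, twop_smul]
      refine congrArg (twop A) ?_
      rw [map_sub, map_inv₀, σ_vi, inv_inv]
      calc FF A i * EE A i - EE A i * FF A i
          = -(EE A i * FF A i - FF A i * EE A i) := (neg_sub _ _).symm
        _ = -(((A.vi i)⁻¹ - A.vi i) • (KK A i - KKp A i)) := by rw [hr]
        _ = (-((A.vi i)⁻¹ - A.vi i)) • (KK A i - KKp A i) := (neg_smul ((A.vi i)⁻¹ - A.vi i) (KK A i - KKp A i)).symm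
        _ = (A.vi i - (A.vi i)⁻¹) • (KK A i - KKp A i) := by
            rw [show -((A.vi i)⁻¹ - A.vi i) = A.vi i - (A.vi i)⁻¹ by ring]
    · rw [if_neg hij] at hr ⊢
      rw [map_sub, map_mul, map_mul, map_zero, Φ_e, Φ_f, twop_mul, twop_mul, twop_sub,
        twop_zero]
      refine congrArg (twop A) ?_
      rw [← neg_sub (EE A i * FF A j), hr, neg_zero]
  | KK i j =>
    have hr := RingQuot.mkAlgHom_rel QV (Rel.KK (A := A) i j)
    simp only [map_mul, KK_def] at hr
    rw [map_mul, map_mul, Φ_k, Φ_k, twop_mul, twop_mul]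
    exact congrArg (twop A) hr.symm
  | KKp i j =>
    have hr := RingQuot.mkAlgHom_rel QV (Rel.KKp (A := A) i j)
    simp only [map_mul, KK_def, KKp_def] at hr
    rw [map_mul, map_mul, Φ_k, Φ_k', twop_mul, twop_mul]
    exact congrArg (twop A) hr.symm
  | KpKp i j =>
    have hr := RingQuot.mkAlgHom_rel QV (Rel.KpKp (A := A) i j)
    simp only [map_mul, KKp_def] at hr
    rw [map_mul, map_mul, Φ_k', Φ_k', twop_mul, twop_mul]
    exact congrArg (twop A) hr.symm
  | KE i j =>
    have hr := RingQuot.mkAlgHom_rel QV (Rel.KE (A := A) i j)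
    simp only [map_mul, map_smul, KK_def, EE_def] at hr
    rw [map_mul, map_smul, map_mul, Φ_k, Φ_e, twop_mul, twop_mul, twop_smul]
    refine congrArg (twop A) ?_
    rw [map_zpow₀, σ_vi, hr, smul_smul, ← mul_zpow, inv_mul_cancel₀ (vi_ne_zero A i),
      one_zpow, one_smul]
  | KF i j =>
    have hr := RingQuot.mkAlgHom_rel QV (Rel.KF (A := A) i j)
    simp only [map_mul, map_smul, KK_def, FF_def] at hr
    rw [map_mul, map_smul, map_mul, Φ_k, Φ_f, twop_mul, twop_mul, twop_smul]
    refine congrArg (twop A) ?_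
    rw [map_zpow₀, σ_vi, hr, smul_smul, ← mul_zpow, inv_mul_cancel₀ (vi_ne_zero A i),
      one_zpow, one_smul]
  | KpE i j =>
    have hr := RingQuot.mkAlgHom_rel QV (Rel.KpE (A := A) i j)
    simp only [map_mul, map_smul, KKp_def, EE_def] at hr
    rw [map_mul, map_smul, map_mul, Φ_k', Φ_e, twop_mul, twop_mul, twop_smul]
    refine congrArg (twop A) ?_
    rw [map_zpow₀, σ_vi, hr, smul_smul, ← mul_zpow, inv_mul_cancel₀ (vi_ne_zero A i),
      one_zpow, one_smul]
  | KpF i j =>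
    have hr := RingQuot.mkAlgHom_rel QV (Rel.KpF (A := A) i j)
    simp only [map_mul, map_smul, KKp_def, FF_def] at hr
    rw [map_mul, map_smul, map_mul, Φ_k', Φ_f, twop_mul, twop_mul, twop_smul]
    refine congrArg (twop A) ?_
    rw [map_zpow₀, σ_vi, hr, smul_smul, ← mul_zpow, inv_mul_cancel₀ (vi_ne_zero A i),
      one_zpow, one_smul]
  | serreE i j hij =>
    have hr := RingQuot.mkAlgHom_rel QV (Rel.serreE (A := A) i j hij)
    simp only [map_sum, map_smul, map_mul, map_pow, map_zero, EE_def, mul_assoc] at hr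
    set n := serreN A i j with hn
    rw [map_zero, map_sum, twop_zero]
    simp only [map_smul, map_mul, map_pow, map_neg, map_one, Φ_e, twop_pow, twop_mul,
      twop_smul, σ_qbinom_vi, twop_sum]
    refine congrArg (twop A) ?_
    calc ∑ r ∈ Finset.range (n + 1), ((-1 : QV) ^ r * qbinom (A.vi i) n r) •
          (EE A i ^ (n - r) * (EE A j * EE A i ^ r))
        = ∑ r ∈ Finset.range (n + 1), ((-1 : QV) ^ (n - r) * qbinom (A.vi i) n (n - r)) •
          (EE A i ^ (n - (n - r)) * (EE A j * EE A i ^ (n - r))) :=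
          (Finset.sum_range_reflect
            (fun r => ((-1 : QV) ^ r * qbinom (A.vi i) n r) •
              (EE A i ^ (n - r) * (EE A j * EE A i ^ r))) (n + 1)).symm
        _ = ∑ r ∈ Finset.range (n + 1), ((-1 : QV)) ^ n •
            (((-1 : QV) ^ r * qbinom (A.vi i) n r) •
              (EE A i ^ r * (EE A j * EE A i ^ (n - r)))) := by
          refine Finset.sum_congr rfl fun r hrr => ?_
          have hrn : r ≤ n := Nat.lt_succ_iff.mp (Finset.mem_range.mp hrr)
          rw [Nat.sub_sub_self hrn, neg_one_pow_sub n r hrn, qbinom_symm _ hrn,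
            mul_assoc, mul_smul]
        _ = ((-1 : QV)) ^ n • ∑ r ∈ Finset.range (n + 1),
            (((-1 : QV) ^ r * qbinom (A.vi i) n r) •
              (EE A i ^ r * (EE A j * EE A i ^ (n - r)))) := (Finset.smul_sum).symm
        _ = 0 := by rw [hr, smul_zero]
  | serreF i j hij =>
    have hr := RingQuot.mkAlgHom_rel QV (Rel.serreF (A := A) i j hij)
    simp only [map_sum, map_smul, map_mul, map_pow, map_zero, FF_def, mul_assoc] at hr
    set n := serreN A i j with hn
    rw [map_zero, map_sum, twop_zero]
    simp only [map_smul, map_mul, map_pow, map_neg, map_one, Φ_f, twop_pow, twop_mul,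
      twop_smul, σ_qbinom_vi, twop_sum]
    refine congrArg (twop A) ?_
    calc ∑ r ∈ Finset.range (n + 1), ((-1 : QV) ^ r * qbinom (A.vi i) n r) •
          (FF A i ^ (n - r) * (FF A j * FF A i ^ r))
        = ∑ r ∈ Finset.range (n + 1), ((-1 : QV) ^ (n - r) * qbinom (A.vi i) n (n - r)) •
          (FF A i ^ (n - (n - r)) * (FF A j * FF A i ^ (n - r))) :=
          (Finset.sum_range_reflect
            (fun r => ((-1 : QV) ^ r * qbinom (A.vi i) n r) •
              (FF A i ^ (n - r) * (FF A j * FF A i ^ r))) (n + 1)).symm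
        _ = ∑ r ∈ Finset.range (n + 1), ((-1 : QV)) ^ n •
            (((-1 : QV) ^ r * qbinom (A.vi i) n r) •
              (FF A i ^ r * (FF A j * FF A i ^ (n - r)))) := by
          refine Finset.sum_congr rfl fun r hrr => ?_
          have hrn : r ≤ n := Nat.lt_succ_iff.mp (Finset.mem_range.mp hrr)
          rw [Nat.sub_sub_self hrn, neg_one_pow_sub n r hrn, qbinom_symm _ hrn,
            mul_assoc, mul_smul]
        _ = ((-1 : QV)) ^ n • ∑ r ∈ Finset.range (n + 1),
            (((-1 : QV) ^ r * qbinom (A.vi i) n r) •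
              (FF A i ^ r * (FF A j * FF A i ^ (n - r)))) := (Finset.smul_sum).symm
        _ = 0 := by rw [hr, smul_zero]

def Ψ : hU A →ₐ[QV] Tw A := RingQuot.liftAlgHom QV ⟨Φ A, fun _ _ h => Φrel A h⟩

/-- the bar involution -/
def bbar (x : hU A) : hU A := unop (Ψ A x)

theorem bbar_twop (z : hU A) : bbar A z = unop (Ψ A z) := rfl

theorem ub_twop (x : hU A) : unop (twop A x) = x := rfl

theorem bbar_mk (y : FA I) :
    bbar A (RingQuot.mkAlgHom QV (Rel A) y) = unop (Φ A y) := by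
  rw [bbar, Ψ, RingQuot.liftAlgHom_mkAlgHom_apply]

theorem bbar_add (x y : hU A) : bbar A (x + y) = bbar A x + bbar A y := by
  rw [bbar, bbar, bbar, map_add]; rfl

theorem bbar_mul (x y : hU A) : bbar A (x * y) = bbar A y * bbar A x := by
  rw [bbar, bbar, bbar, map_mul]; rfl

theorem bbar_one : bbar A (1 : hU A) = 1 := by rw [bbar, map_one]; rfl

theorem bbar_algebraMap (c : QV) :
    bbar A (algebraMap QV (hU A) c) = algebraMap QV (hU A) (σ c) := by
  rw [bbar, AlgHom.commutes, tw_algebraMap, ub_twop]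

theorem bbar_qsmul (q : ℚ) (x : hU A) : bbar A (q • x) = q • bbar A x := by
  rw [← algebraMap_smul QV q x, Algebra.smul_def, bbar_mul, bbar_algebraMap, σ_rat,
    ← Algebra.commutes, ← Algebra.smul_def, algebraMap_smul]

theorem bbar_E (i : I) : bbar A (EE A i) = EE A i := by
  have h := bbar_mk A (e i)
  rwa [Φ_e, ub_twop, EE_def] at h
theorem bbar_F (i : I) : bbar A (FF A i) = FF A i := by
  have h := bbar_mk A (f i)
  rwa [Φ_f, ub_twop, FF_def] at h
theorem bbar_K (i : I) : bbar A (KK A i) = KK A i := by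
  have h := bbar_mk A (k i)
  rwa [Φ_k, ub_twop, KK_def] at h
theorem bbar_Kp (i : I) : bbar A (KKp A i) = KKp A i := by
  have h := bbar_mk A (k' i)
  rwa [Φ_k', ub_twop, KKp_def] at h

theorem mkι_E (i : I) :
    RingQuot.mkAlgHom QV (Rel A) (FreeAlgebra.ι QV (DDGen.E i)) = EE A i := rfl
theorem mkι_F (i : I) :
    RingQuot.mkAlgHom QV (Rel A) (FreeAlgebra.ι QV (DDGen.F i)) = FF A i := rfl
theorem mkι_K (i : I) :
    RingQuot.mkAlgHom QV (Rel A) (FreeAlgebra.ι QV (DDGen.K i)) = KK A i := rfl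
theorem mkι_Kp (i : I) :
    RingQuot.mkAlgHom QV (Rel A) (FreeAlgebra.ι QV (DDGen.K' i)) = KKp A i := rfl

theorem bbar_invol (x : hU A) : bbar A (bbar A x) = x := by
  obtain ⟨y, rfl⟩ := RingQuot.mkAlgHom_surjective QV (Rel A) x
  induction y using FreeAlgebra.induction with
  | grade0 c =>
    rw [AlgHom.commutes, bbar_algebraMap, bbar_algebraMap, σ_σ]
  | grade1 g =>
    cases g with
    | E i => rw [mkι_E, bbar_E, bbar_E]
    | F i => rw [mkι_F, bbar_F, bbar_F]
    | K i => rw [mkι_K, bbar_K, bbar_K]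
    | K' i => rw [mkι_Kp, bbar_Kp, bbar_Kp]
  | mul a b ha hb => rw [map_mul, bbar_mul, bbar_mul, ha, hb]
  | add a b ha hb => rw [map_add, bbar_add, bbar_add, ha, hb]

/-! ### Uniqueness -/

theorem uniq (b' : hU A → hU A)
    (hadd : ∀ x y, b' (x + y) = b' x + b' y)
    (hone : b' 1 = 1)
    (hmul : ∀ x y, b' (x * y) = b' y * b' x)
    (hsqv : b' (algebraMap QV (hU A) sqv) = algebraMap QV (hU A) sqv⁻¹)
    (hE : ∀ i, b' (EE A i) = EE A i)
    (hF : ∀ i, b' (FF A i) = FF A i)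
    (hK : ∀ i, b' (KK A i) = KK A i)
    (hKp : ∀ i, b' (KKp A i) = KKp A i) :
    b' = bbar A := by
  have hzero : b' 0 = 0 := by
    have h0 := hadd 0 0
    rw [add_zero] at h0
    exact left_eq_add.mp h0
  have g'mul : ∀ c d : QV, b' (algebraMap QV (hU A) (c * d))
      = b' (algebraMap QV (hU A) c) * b' (algebraMap QV (hU A) d) := by
    intro c d
    rw [mul_comm c d, map_mul, hmul]
  let g' : QV →+* hU A :=
    { toFun := fun c => b' (algebraMap QV (hU A) c)
      map_one' := by show b' (algebraMap QV (hU A) 1) = 1; rw [map_one, hone]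
      map_mul' := g'mul
      map_zero' := by show b' (algebraMap QV (hU A) 0) = 0; rw [map_zero, hzero]
      map_add' := fun c d => by
        show b' (algebraMap QV (hU A) (c + d)) = _
        rw [map_add, hadd] }
  have hg' : g' = (algebraMap QV (hU A)).comp σ := by
    apply ringHom_ext
    · intro c hc
      have hune : algebraMap (Polynomial ℚ) QV c ≠ 0 := fun h =>
        hc (IsFractionRing.injective (Polynomial ℚ) QV (by simpa using h))
      set u := algebraMap (Polynomial ℚ) QV c with hu
      have h1 : g' u * g' u⁻¹ = 1 := by rw [← map_mul, mul_inv_cancel₀ hune, map_one]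
      have h2 : g' u⁻¹ * g' u = 1 := by rw [← map_mul, inv_mul_cancel₀ hune, map_one]
      exact ⟨⟨g' u, g' u⁻¹, h1, h2⟩, rfl⟩
    · show b' (algebraMap QV (hU A) sqv) = algebraMap QV (hU A) (σ sqv)
      rw [hsqv, σ_sqv]
  have halg : ∀ c : QV, b' (algebraMap QV (hU A) c) = algebraMap QV (hU A) (σ c) :=
    fun c => RingHom.congr_fun hg' c
  funext x
  obtain ⟨y, rfl⟩ := RingQuot.mkAlgHom_surjective QV (Rel A) x
  induction y using FreeAlgebra.induction with
  | grade0 c => rw [AlgHom.commutes, halg, bbar_algebraMap]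
  | grade1 g =>
    cases g with
    | E i => rw [mkι_E, hE, bbar_E]
    | F i => rw [mkι_F, hF, bbar_F]
    | K i => rw [mkι_K, hK, bbar_K]
    | K' i => rw [mkι_Kp, hKp, bbar_Kp]
  | mul a b ha hb => rw [map_mul, hmul, bbar_mul, ha, hb]
  | add a b ha hb => rw [map_add, hadd, bbar_add, ha, hb]

end BarAux

/-- There exists a unique `ℚ`-algebra anti-automorphism
(bar-involution) of `ĥU` sending `v^{1/2} ↦ v^{-1/2}` and fixing
`E_i, F_i, K_i, K_i'`, and it is an involution. -/
theorem statement5 {I : Type} [DecidableEq I] (A : GCM I) :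
    ∃! b : DD.hU A → DD.hU A,
      (∀ x y, b (x + y) = b x + b y) ∧
      (∀ (q : ℚ) (x : DD.hU A), b (q • x) = q • b x) ∧
      b 1 = 1 ∧ (∀ x y, b (x * y) = b y * b x) ∧
      b (algebraMap QV (DD.hU A) sqv) = algebraMap QV (DD.hU A) sqv⁻¹ ∧
      (∀ i, b (DD.EE A i) = DD.EE A i) ∧
      (∀ i, b (DD.FF A i) = DD.FF A i) ∧
      (∀ i, b (DD.KK A i) = DD.KK A i) ∧
      (∀ i, b (DD.KKp A i) = DD.KKp A i) ∧
      (∀ x, b (b x) = x) := by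
  refine ⟨BarAux.bbar A, ⟨BarAux.bbar_add A, BarAux.bbar_qsmul A, BarAux.bbar_one A,
    BarAux.bbar_mul A, ?_, BarAux.bbar_E A, BarAux.bbar_F A, BarAux.bbar_K A,
    BarAux.bbar_Kp A, BarAux.bbar_invol A⟩, ?_⟩
  · rw [BarAux.bbar_algebraMap, BarAux.σ_sqv]
  · rintro b' ⟨hadd, _hq, hone, hmul, hsqv, hE, hF, hK, hKp, _hinv⟩
    exact BarAux.uniq A b' hadd hone hmul hsqv hE hF hK hKp

end
end

section
/- In the algebra f of type A_2, the elements θ_{12} = (v^{1/2}θ_1θ_2 − v^{-1/2}θ_2θ_1)/(v−v^{-1}) and θ_{21} = (v^{1/2}θ_2θ_1 − v^{-1/2}θ_1θ_2)/(v−v^{-1}) commute: θ_{12}θ_{21} = θ_{21}θ_{12}. -/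
/-! The algebra `f` of type `A₂`: generated by `θ₁, θ₂` over `ℚ(v^{1/2})`
subject to the quantum Serre relations
`θᵢ²θⱼ − (v+v⁻¹)θᵢθⱼθᵢ + θⱼθᵢ² = 0` for `{i,j} = {1,2}`. -/

noncomputable section

namespace FA2

abbrev FA := FreeAlgebra QV (Fin 2)

def x1 : FA := FreeAlgebra.ι QV 0
def x2 : FA := FreeAlgebra.ι QV 1

/-- the type `A₂` quantum Serre relations -/
inductive Rel : FA → FA → Prop
  | serre12 : Rel (x1 * x1 * x2 - (qv + qv⁻¹) • (x1 * x2 * x1) + x2 * x1 * x1) 0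
  | serre21 : Rel (x2 * x2 * x1 - (qv + qv⁻¹) • (x2 * x1 * x2) + x1 * x2 * x2) 0

/-- the algebra `f` of type `A₂` -/
abbrev f := RingQuot Rel

/-- `θ₁` -/
def θ1 : f := RingQuot.mkAlgHom QV Rel x1
/-- `θ₂` -/
def θ2 : f := RingQuot.mkAlgHom QV Rel x2

/-- `θ₁₂ = (v^{1/2}θ₁θ₂ − v^{-1/2}θ₂θ₁)/(v−v⁻¹)` -/
def θ12 : f := (qv - qv⁻¹)⁻¹ • (sqv • (θ1 * θ2) - sqv⁻¹ • (θ2 * θ1))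

/-- `θ₂₁ = (v^{1/2}θ₂θ₁ − v^{-1/2}θ₁θ₂)/(v−v⁻¹)` -/
def θ21 : f := (qv - qv⁻¹)⁻¹ • (sqv • (θ2 * θ1) - sqv⁻¹ • (θ1 * θ2))

end FA2


namespace FA2

lemma serre12' : θ1 * θ1 * θ2 - (qv + qv⁻¹) • (θ1 * θ2 * θ1) + θ2 * θ1 * θ1 = 0 := by
  have h := RingQuot.mkAlgHom_rel QV Rel.serre12
  simpa [map_mul, map_add, map_sub, map_smul, θ1, θ2] using h

lemma serre21' : θ2 * θ2 * θ1 - (qv + qv⁻¹) • (θ2 * θ1 * θ2) + θ1 * θ2 * θ2 = 0 := by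
  have h := RingQuot.mkAlgHom_rel QV Rel.serre21
  simpa [map_mul, map_add, map_sub, map_smul, θ1, θ2] using h

lemma e1 : θ2 * θ1 * θ1 = (qv + qv⁻¹) • (θ1 * θ2 * θ1) - θ1 * θ1 * θ2 := by
  have h := serre12'
  rw [eq_sub_iff_add_eq, ← sub_eq_zero]
  abel_nf
  abel_nf at h
  linear_combination (norm := abel) h

lemma e2 : θ2 * θ2 * θ1 = (qv + qv⁻¹) • (θ2 * θ1 * θ2) - θ1 * θ2 * θ2 := by
  have h := serre21'
  rw [eq_sub_iff_add_eq, ← sub_eq_zero]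
  abel_nf
  abel_nf at h
  linear_combination (norm := abel) h

lemma key : (θ1 * θ2) * (θ2 * θ1) = (θ2 * θ1) * (θ1 * θ2) := by
  have l : (θ1 * θ2) * (θ2 * θ1) = (qv + qv⁻¹) • (θ1 * θ2 * θ1 * θ2) - θ1 * θ1 * θ2 * θ2 := by
    calc (θ1 * θ2) * (θ2 * θ1) = θ1 * (θ2 * θ2 * θ1) := by noncomm_ring
    _ = θ1 * ((qv + qv⁻¹) • (θ2 * θ1 * θ2) - θ1 * θ2 * θ2) := by rw [e2]
    _ = (qv + qv⁻¹) • (θ1 * θ2 * θ1 * θ2) - θ1 * θ1 * θ2 * θ2 := by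
      rw [mul_sub, mul_smul_comm]; noncomm_ring
  have r : (θ2 * θ1) * (θ1 * θ2) = (qv + qv⁻¹) • (θ1 * θ2 * θ1 * θ2) - θ1 * θ1 * θ2 * θ2 := by
    calc (θ2 * θ1) * (θ1 * θ2) = (θ2 * θ1 * θ1) * θ2 := by noncomm_ring
    _ = ((qv + qv⁻¹) • (θ1 * θ2 * θ1) - θ1 * θ1 * θ2) * θ2 := by rw [e1]
    _ = (qv + qv⁻¹) • (θ1 * θ2 * θ1 * θ2) - θ1 * θ1 * θ2 * θ2 := by
      rw [sub_mul, smul_mul_assoc]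
  rw [l, r]

end FA2

/-- In the algebra `f` of type `A₂`, the elements `θ₁₂` and
`θ₂₁` commute. -/
theorem statement9 : FA2.θ12 * FA2.θ21 = FA2.θ21 * FA2.θ12 := by
  unfold FA2.θ12 FA2.θ21
  simp only [smul_sub, sub_mul, mul_sub, smul_mul_assoc, mul_smul_comm, smul_smul]
  rw [FA2.key]
  simp only [mul_comm, mul_left_comm, mul_assoc]
  abel

end
end
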